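/- The quadratic map α(x, y, z) = (x, y, z + (1/2)·x·y) conjugates the linear rotation Ω about the z-axis through angle ω to the Nil rotation M: that is, α ∘ Ω ∘ α⁻¹ equals the map (x,y,z) ↦ (x cos ω − y sin ω, x sin ω + y cos ω, z − (1/2)xy + (1/4)(x² − y²) sin 2ω + (1/2)xy cos 2ω). -/
import Mathlib

/-- The quadratic map α(x,y,z) = (x, y, z + xy/2). -/
noncomputable def nilAlpha (p : ℝ × ℝ × ℝ) : ℝ × ℝ × ℝ :=
  (p.1, p.2.1, p.2.2 + (1 / 2) * p.1 * p.2.1)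

/-- The inverse quadratic map α⁻¹(x,y,z) = (x, y, z − xy/2). -/
noncomputable def nilAlphaInv (p : ℝ × ℝ × ℝ) : ℝ × ℝ × ℝ :=
  (p.1, p.2.1, p.2.2 - (1 / 2) * p.1 * p.2.1)

/-- The linear rotation Ω about the z-axis through angle ω. -/
noncomputable def linRot (ω : ℝ) (p : ℝ × ℝ × ℝ) : ℝ × ℝ × ℝ :=
  (p.1 * Real.cos ω - p.2.1 * Real.sin ω, p.1 * Real.sin ω + p.2.1 * Real.cos ω, p.2.2)

/-- The Nil rotation M about the z-axis at the origin through angle ω. -/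
noncomputable def nilRot (ω : ℝ) (p : ℝ × ℝ × ℝ) : ℝ × ℝ × ℝ :=
  (p.1 * Real.cos ω - p.2.1 * Real.sin ω,
   p.1 * Real.sin ω + p.2.1 * Real.cos ω,
   p.2.2 - (1 / 2) * p.1 * p.2.1 + (1 / 4) * (p.1 ^ 2 - p.2.1 ^ 2) * Real.sin (2 * ω)
     + (1 / 2) * p.1 * p.2.1 * Real.cos (2 * ω))

/-- The quadratic map α conjugates the linear rotation Ω to the Nil rotation M:
α ∘ Ω ∘ α⁻¹ = M. -/
theorem nil_rotation_conjugate (ω : ℝ) (p : ℝ × ℝ × ℝ) :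
    nilAlpha (linRot ω (nilAlphaInv p)) = nilRot ω p := by
  simp only [nilAlpha, nilAlphaInv, linRot, nilRot, Real.sin_two_mul, Real.cos_two_mul']
  refine Prod.ext rfl (Prod.ext rfl ?_)
  ring
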